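/- arXiv:1408.3729 — 2 statements merged into one kernel-verified Lean document; each statement's English description precedes it below -/
import Mathlib

section
/- Let n ≥ 1 and let ι be a fixed-point-free involution of ZMod (2*n). Define the boundary permutation ρ of ι by ρ(i) = ι(i) + 1 (so ρ is the composition of ι with the cyclic shift i ↦ i+1; it is a permutation of ZMod (2*n)). Then the number of orbits (cycles) of ρ is congruent to n + 1 modulo 2. -/
/-!
The sign of a permutation `σ` of a finite set `X` is `(-1) ^ (|X| + #orbits σ)`: the orbits of
`σ` are its fixed points together with one orbit per cycle of its cycle decomposition. The
boundary permutation `ρ` is the cyclic shift of `ZMod (2 * n)`, of sign `-1`, composed with `ι`, a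
product of `n` disjoint transpositions, of sign `(-1) ^ n`. Comparing the two expressions for
`sign ρ` gives `#orbits ρ ≡ n + 1 (mod 2)`.
-/

open MulAction Subgroup

namespace Equiv.Perm

variable {α : Type*}

theorem orbitRel_zpowers_iff_sameCycle (σ : Perm α) {x y : α} :
    orbitRel (zpowers σ) α x y ↔ σ.SameCycle x y := by
  rw [orbitRel_apply, mem_orbit_iff, sameCycle_comm]
  constructor
  · rintro ⟨⟨_, k, rfl⟩, hk⟩
    exact ⟨k, hk⟩
  · rintro ⟨k, hk⟩
    exact ⟨⟨σ ^ k, k, rfl⟩, hk⟩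

variable [Fintype α] [DecidableEq α]

def cycleOrFixedPoint (σ : Perm α) (x : α) : Function.fixedPoints σ ⊕ σ.cycleFactorsFinset :=
  if hx : σ x = x then .inl ⟨x, hx⟩
  else .inr ⟨σ.cycleOf x, cycleOf_mem_cycleFactorsFinset_iff.mpr (mem_support.mpr hx)⟩

theorem cycleOrFixedPoint_eq_iff (σ : Perm α) {x y : α} :
    σ.cycleOrFixedPoint x = σ.cycleOrFixedPoint y ↔ σ.SameCycle x y := by
  by_cases hx : σ x = x <;> by_cases hy : σ y = y <;>
    simp only [cycleOrFixedPoint, hx, hy, dif_pos, dif_neg, not_false_eq_true, reduceCtorEq,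
      false_iff, Sum.inl.injEq, Sum.inr.injEq, Subtype.ext_iff]
  · exact ⟨fun h => h ▸ .rfl, fun h => h.eq_of_left hx⟩
  · exact fun h => hy (h.apply_eq_self_iff.mp hx)
  · exact fun h => hx (h.apply_eq_self_iff.mpr hy)
  · exact (sameCycle_iff_cycleOf_eq_of_mem_support (mem_support.mpr hx) (mem_support.mpr hy)).symm

theorem cycleOrFixedPoint_surjective (σ : Perm α) : Function.Surjective σ.cycleOrFixedPoint := by
  rintro (⟨x, hx⟩ | ⟨c, hc⟩)
  · exact ⟨x, dif_pos hx⟩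
  · obtain ⟨x, hx⟩ := (mem_cycleFactorsFinset_iff.mp hc).1.nonempty_support
    have hσx : σ x ≠ x := mem_support.mp (mem_cycleFactorsFinset_support_le hc hx)
    refine ⟨x, ?_⟩
    simp only [cycleOrFixedPoint, dif_neg hσx, (cycle_is_cycleOf hx hc).symm]

theorem nat_card_orbitRel_zpowers (σ : Perm α) :
    Nat.card (orbitRel.Quotient (zpowers σ) α) =
      Fintype.card α - σ.cycleType.sum + Multiset.card σ.cycleType := by
  have hker : orbitRel (zpowers σ) α = Setoid.ker σ.cycleOrFixedPoint := by
    ext x y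
    rw [Setoid.ker_def, cycleOrFixedPoint_eq_iff, orbitRel_zpowers_iff_sameCycle]
  rw [orbitRel.Quotient, hker,
    Nat.card_congr (Setoid.quotientKerEquivOfSurjective _ σ.cycleOrFixedPoint_surjective),
    Nat.card_sum, Nat.card_eq_fintype_card, card_fixedPoints, Nat.card_eq_fintype_card,
    Fintype.card_coe, cycleType_def, Multiset.card_map]
  rfl

theorem sign_eq_neg_one_pow_card_add_card_orbits (σ : Perm α) :
    sign σ = (-1) ^ (Fintype.card α + Nat.card (orbitRel.Quotient (zpowers σ) α)) := by
  obtain ⟨d, hd⟩ := Nat.exists_eq_add_of_le σ.sum_cycleType_le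
  rw [sign_of_cycleType, nat_card_orbitRel_zpowers, hd, Nat.add_sub_cancel_left,
    show σ.cycleType.sum + d + (d + Multiset.card σ.cycleType) =
      σ.cycleType.sum + Multiset.card σ.cycleType + 2 * d by ring, pow_add _ _ (2 * d), pow_mul,
    Int.units_sq, one_pow, mul_one]

theorem sign_of_involutive_of_forall_apply_ne {ι : Perm α} (hinv : Function.Involutive ι)
    (hfree : ∀ x, ι x ≠ x) : sign ι = (-1) ^ (Fintype.card α / 2) := by
  have hfix : Fintype.card (Function.fixedPoints ι) = 0 :=
    Fintype.card_eq_zero_iff.mpr ⟨fun x => hfree x x.2⟩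
  rw [sign_of_pow_two_eq_one (ext fun x => hinv x), hfix, Nat.sub_zero]

end Equiv.Perm

theorem ZMod.sign_addRight_one (m : ℕ) [NeZero m] :
    Equiv.Perm.sign (Equiv.addRight (1 : ZMod m)) = (-1) ^ (m - 1) := by
  obtain ⟨k, rfl⟩ := Nat.exists_eq_succ_of_ne_zero (NeZero.ne m)
  rw [← sign_finRotate (k + 1)]
  congr
  ext i
  exact (finRotate_apply i).symm

theorem mod_two_eq_of_neg_one_pow_eq {a b : ℕ} (h : (-1 : ℤˣ) ^ a = (-1) ^ b) :
    a % 2 = b % 2 := by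
  have hab : Even (a + b) := by
    rw [← neg_one_pow_eq_one_iff_even (by decide : (-1 : ℤˣ) ≠ 1), pow_add, h, ← sq, Int.units_sq]
  have := Nat.even_add.mp hab
  rw [Nat.even_iff, Nat.even_iff] at this
  omega

/-- For `n ≥ 1` and a fixed-point-free involution `ι` of `ZMod (2*n)`, the number of
orbits (cycles) of the boundary permutation `ρ` defined by `ρ i = ι i + 1` is congruent
to `n + 1` modulo `2`. -/
theorem fpb_orbit_count_parity (n : ℕ) (hn : 1 ≤ n)
    (ι ρ : Equiv.Perm (ZMod (2 * n)))
    (hinv : Function.Involutive ι) (hfpf : ∀ i, ι i ≠ i)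
    (hρ : ∀ i, ρ i = ι i + 1) :
    Nat.card (MulAction.orbitRel.Quotient (Subgroup.zpowers ρ) (ZMod (2 * n))) % 2
      = (n + 1) % 2 := by
  have : NeZero (2 * n) := ⟨by omega⟩
  have hρι : ρ = Equiv.addRight 1 * ι := Equiv.ext hρ
  have hsign := Equiv.Perm.sign_eq_neg_one_pow_card_add_card_orbits ρ
  rw [hρι, map_mul, ZMod.sign_addRight_one,
    Equiv.Perm.sign_of_involutive_of_forall_apply_ne hinv hfpf, ← pow_add, ← hρι,
    ZMod.card] at hsign
  have := mod_two_eq_of_neg_one_pow_eq hsign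
  omega
end

section
/- Let n ≥ 1, let ι be a fixed-point-free involution of ZMod (2*n), let r be the reversal permutation r(i) = -i - 1 of ZMod (2*n), and let m be the negation permutation m(i) = -i. Then r ∘ ι ∘ r is again a fixed-point-free involution, and its boundary permutation ρ' (defined by ρ'(i) = (r ∘ ι ∘ r)(i) + 1) equals m ∘ ρ⁻¹ ∘ m⁻¹, where ρ(i) = ι(i) + 1 is the boundary permutation of ι. In particular ρ' and ρ have the same number of orbits. -/
/-!
Reversal `r` is an involution, so `r * ι * r` is a conjugate of `ι` and inherits being a
fixed-point-free involution. Since `ρ⁻¹ j = ι (j - 1)`, unwinding the definitions gives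
`ρ' = m * ρ⁻¹ * m⁻¹`; the orbits of a permutation are its cycles, which are carried bijectively
onto the cycles of any conjugate, and `ρ⁻¹` has the same cycles as `ρ`.
-/

open Equiv Function

namespace Equiv.Perm

variable {α : Type*}

theorem orbitRel_zpowers_iff_sameCycle_s6 (σ : Perm α) (a b : α) :
    MulAction.orbitRel (Subgroup.zpowers σ) α a b ↔ σ.SameCycle b a := by
  simp only [MulAction.orbitRel_apply, MulAction.mem_orbit_iff, Subtype.exists,
    Subgroup.mem_zpowers_iff]
  exact ⟨fun ⟨_, ⟨k, hk⟩, h⟩ => ⟨k, hk ▸ h⟩, fun ⟨k, h⟩ => ⟨_, ⟨k, rfl⟩, h⟩⟩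

theorem card_orbitRel_quotient_zpowers_conj (σ c : Perm α) :
    Nat.card (MulAction.orbitRel.Quotient (Subgroup.zpowers (c * σ * c⁻¹)) α)
      = Nat.card (MulAction.orbitRel.Quotient (Subgroup.zpowers σ) α) :=
  Nat.card_congr <| Quotient.congr c⁻¹ fun a b => by
    rw [orbitRel_zpowers_iff_sameCycle_s6, orbitRel_zpowers_iff_sameCycle_s6, sameCycle_conj]

theorem involutive_mul_mul_self {ι r : Perm α} (hι : Involutive ι) (hr : Involutive r) :
    Involutive (r * ι * r) := fun x => by
  simp only [mul_apply, hr _, hι _]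

theorem mul_mul_self_apply_ne {ι r : Perm α} (hfree : ∀ i, ι i ≠ i) (hr : Involutive r) (i : α) :
    (r * ι * r) i ≠ i := fun h =>
  hfree (r i) (by rw [← hr (ι (r i))]; exact congrArg r h)

theorem inv_apply_eq_of_apply_eq_add {G : Type*} [AddGroup G] {ι ρ : Perm G} (hι : Involutive ι)
    {c : G} (hρ : ∀ i, ρ i = ι i + c) (j : G) : ρ⁻¹ j = ι (j - c) := by
  rw [inv_eq_iff_eq, hρ, hι, sub_add_cancel]

end Equiv.Perm

open Equiv.Perm in
theorem fpb_reversal_conjugation_general (n : ℕ)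
    (ι r m ρ ρ' : Equiv.Perm (ZMod (2 * n)))
    (hinv : Function.Involutive ι) (hfpf : ∀ i, ι i ≠ i)
    (hr : ∀ i, r i = -i - 1)
    (hm : ∀ i, m i = -i)
    (hρ : ∀ i, ρ i = ι i + 1)
    (hρ' : ∀ i, ρ' i = (r * ι * r) i + 1) :
    Function.Involutive (r * ι * r : Equiv.Perm (ZMod (2 * n))) ∧
      (∀ i, (r * ι * r) i ≠ i) ∧
      ρ' = m * ρ⁻¹ * m⁻¹ ∧
      Nat.card (MulAction.orbitRel.Quotient (Subgroup.zpowers ρ') (ZMod (2 * n)))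
        = Nat.card (MulAction.orbitRel.Quotient (Subgroup.zpowers ρ) (ZMod (2 * n))) := by
  have hr_inv : Involutive r := fun i => by rw [hr, hr]; ring
  have hm_inv : ∀ i, m⁻¹ i = -i := fun i => by rw [inv_eq_iff_eq, hm, neg_neg]
  have hρ'_eq : ρ' = m * ρ⁻¹ * m⁻¹ := by
    ext i
    rw [hρ', mul_apply, mul_apply, mul_apply, mul_apply, hm_inv,
      inv_apply_eq_of_apply_eq_add hinv hρ, hm, hr, hr]
    ring
  refine ⟨involutive_mul_mul_self hinv hr_inv, mul_mul_self_apply_ne hfpf hr_inv, hρ'_eq, ?_⟩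
  rw [hρ'_eq, card_orbitRel_quotient_zpowers_conj, Subgroup.zpowers_inv]

/-- Conjugating a fixed-point-free involution `ι` of `ZMod (2*n)` by the reversal
`r : i ↦ -i - 1` yields again a fixed-point-free involution, whose boundary permutation
`ρ'` (given by `ρ' i = (r ∘ ι ∘ r) i + 1`) equals `m ∘ ρ⁻¹ ∘ m⁻¹`, where `m : i ↦ -i`
is negation and `ρ i = ι i + 1` is the boundary permutation of `ι`.  In particular
`ρ'` and `ρ` have the same number of orbits. -/
theorem fpb_reversal_conjugation (n : ℕ) (hn : 1 ≤ n)
    (ι r m ρ ρ' : Equiv.Perm (ZMod (2 * n)))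
    (hinv : Function.Involutive ι) (hfpf : ∀ i, ι i ≠ i)
    (hr : ∀ i, r i = -i - 1)
    (hm : ∀ i, m i = -i)
    (hρ : ∀ i, ρ i = ι i + 1)
    (hρ' : ∀ i, ρ' i = (r * ι * r) i + 1) :
    Function.Involutive (r * ι * r : Equiv.Perm (ZMod (2 * n))) ∧
      (∀ i, (r * ι * r) i ≠ i) ∧
      ρ' = m * ρ⁻¹ * m⁻¹ ∧
      Nat.card (MulAction.orbitRel.Quotient (Subgroup.zpowers ρ') (ZMod (2 * n)))
        = Nat.card (MulAction.orbitRel.Quotient (Subgroup.zpowers ρ) (ZMod (2 * n))) :=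
  fpb_reversal_conjugation_general n ι r m ρ ρ' hinv hfpf hr hm hρ hρ'
end
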